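/- Let χ be the substitution on {a,b} with χ(a) = aab and χ(b) = abb, and let X_χ be its substitution subshift. Then there exists a continuous surjection F : X_χ → X_χ satisfying F ∘ σ⁴ = σ² ∘ F; that is, (X_χ, σ²) is a topological factor of (X_χ, σ⁴). -/

import Mathlib

open Set Topology Classical

noncomputable section

/-- The left shift `σ` on bi-infinite sequences: `(σ x) n = x (n+1)`. -/
def shiftMap {A : Type} (x : ℤ → A) : ℤ → A := fun n => x (n + 1)

/-- The shift by an integer amount: `shiftZ n x = σ^n x`. -/
def shiftZ {A : Type} (n : ℤ) (x : ℤ → A) : ℤ → A := fun m => x (m + n)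

/-- A bi-infinite sequence is Toeplitz if every coordinate is periodically repeated. -/
def IsToeplitz {A : Type} (x : ℤ → A) : Prop :=
  ∀ i : ℤ, ∃ p : ℕ, 0 < p ∧ ∀ k : ℤ, x (i + k * (p : ℤ)) = x i

/-- The closure of the full shift orbit of `x`. -/
def orbitClosure {A : Type} [TopologicalSpace A] (x : ℤ → A) : Set (ℤ → A) :=
  closure {y | ∃ n : ℤ, shiftZ n x = y}

/-- The finite word `x_i x_{i+1} ⋯ x_{i+n-1}`. -/
def seqWord {A : Type} (x : ℤ → A) (i : ℤ) (n : ℕ) : List A :=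
  List.ofFn fun m : Fin n => x (i + (m : ℕ))

/-- Iterates `θ^k` of a substitution, applied to a letter. -/
def substPow {A : Type} (θ : A → List A) : ℕ → A → List A
  | 0, a => [a]
  | k + 1, a => (θ a).flatMap (substPow θ k)

/-- The substitution subshift of `θ`: all sequences whose finite subwords occur in
some `θ^k(a)`. -/
def substShift {A : Type} (θ : A → List A) : Set (ℤ → A) :=
  {x | ∀ i : ℤ, ∀ n : ℕ, ∃ (k : ℕ) (a : A), (seqWord x i n).IsInfix (substPow θ k a)}

/-- The full orbit of `x` under an (invertible) map `S`, within the set `X`. -/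
def orbitIn {α : Type} (S : α → α) (X : Set α) (x : α) : Set α :=
  {y | y ∈ X ∧ ∃ n : ℕ, S^[n] x = y ∨ S^[n] y = x}

/-- Every `S`-orbit within `X` is dense in `X`. -/
def MinimalOn {α : Type} [TopologicalSpace α] (S : α → α) (X : Set α) : Prop :=
  ∀ x ∈ X, X ⊆ closure (orbitIn S X x)

/-- Every `T`-orbit in `X` is the union of exactly `c` distinct `S`-orbits. -/
def OrbitNumberOn {α : Type} (T S : α → α) (X : Set α) (c : ℕ) : Prop :=
  ∀ x ∈ X, ∃ r : Fin c → α,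
    (∀ i, r i ∈ orbitIn T X x) ∧
    (∀ i j, i ≠ j → r j ∉ orbitIn S X (r i)) ∧
    (∀ y ∈ orbitIn T X x, ∃ i, y ∈ orbitIn S X (r i))

/-- `S` restricts to a homeomorphism of the subset `X`. -/
def RestrictsToHomeomorph {α : Type} [TopologicalSpace α] (S : α → α) (X : Set α) : Prop :=
  ∃ e : X ≃ₜ X, ∀ x : X, (e x : α) = S (x : α)

/-- The systems `(X, S)` and `(Y, R)` are topologically conjugate. -/
def TopConj {α β : Type} [TopologicalSpace α] [TopologicalSpace β]
    (X : Set α) (S : α → α) (Y : Set β) (R : β → β) : Prop :=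
  ∃ (hS : Set.MapsTo S X X) (hR : Set.MapsTo R Y Y) (h : X ≃ₜ Y),
    ∀ x : X, h (Set.MapsTo.restrict S X X hS x) = Set.MapsTo.restrict R Y Y hR (h x)

/-- `(Y, R)` is a topological factor of `(X, S)`. -/
def IsFactorOn {α β : Type} [TopologicalSpace α] [TopologicalSpace β]
    (X : Set α) (S : α → α) (Y : Set β) (R : β → β) : Prop :=
  ∃ F : α → β, Set.MapsTo F X Y ∧ ContinuousOn F X ∧ Set.SurjOn F X Y ∧
    ∀ x ∈ X, F (S x) = R (F x)

/-- `(X, S)` is a Toeplitz flow: it is topologically conjugate to the orbit closure of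
some Toeplitz sequence over some finite alphabet, with the shift map. -/
def IsToeplitzFlow {α : Type} [TopologicalSpace α] (X : Set α) (S : α → α) : Prop :=
  ∃ (B : Type) (_ : Fintype B) (z : ℤ → B), IsToeplitz z ∧
    (letI : TopologicalSpace B := ⊥
     TopConj X S (orbitClosure z) shiftMap)

/-- `Per_p(x)`: the set of positions where `x` is periodic with period `p`. -/
def PerSet {A : Type} (x : ℤ → A) (p : ℕ) : Set ℤ :=
  {k | ∀ n : ℤ, x (k + n * (p : ℤ)) = x k}

/-- `p` is an essential period of `x`. -/
def IsEssentialPeriod {A : Type} (x : ℤ → A) (p : ℕ) : Prop :=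
  0 < p ∧ ¬ ∃ q : ℕ, 0 < q ∧ q < p ∧
    ((fun k => k + (q : ℤ)) '' PerSet x p = PerSet x p) ∧
    (∀ k ∈ PerSet x p, x (k + (q : ℤ)) = x k)

/-- A period structure for a Toeplitz sequence `x`. -/
def IsPeriodStructure {A : Type} (x : ℤ → A) (p : ℕ → ℕ) : Prop :=
  StrictMono p ∧ (∀ k, IsEssentialPeriod x (p k)) ∧
  (∀ k, p k ∣ p (k + 1)) ∧ (⋃ k, PerSet x (p k)) = Set.univ

/-- `x` is a (σ-)periodic sequence. -/
def IsPeriodicSeq {A : Type} (x : ℤ → A) : Prop :=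
  ∃ n : ℕ, 0 < n ∧ ∀ m : ℤ, x (m + (n : ℤ)) = x m

/-- `z` is the bi-infinite concatenation of the `ψ`-images of the letters of `y`,
with `ψ(y₀)` beginning at coordinate `0`. -/
def IsConcat {B C : Type} (ψ : B → List C) (y : ℤ → B) (z : ℤ → C) : Prop :=
  ∃ s : ℤ → ℤ, s 0 = 0 ∧
    (∀ n : ℤ, s (n + 1) = s n + ((ψ (y n)).length : ℤ)) ∧
    (∀ n : ℤ, ∀ j : Fin (ψ (y n)).length, z (s n + (j : ℕ)) = (ψ (y n)).get j)

/-- `p(x,n) = Σ_{i<n} p(Sⁱ x)`. -/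
def psum {X : Type} (p : X → ℕ) (S : X → X) (x : X) (n : ℕ) : ℕ :=
  ∑ i ∈ Finset.range n, p (S^[i] x)


/-- The substitution χ(a) = aab, χ(b) = abb on {a, b} = Fin 2 (a = 0, b = 1). -/
def chi : Fin 2 → List (Fin 2) := fun i => if i = 0 then [0, 0, 1] else [0, 1, 1]

/-!
The factor map is `evenFlip x n = 1 - x (2n)`. Writing `chiStar` for `χ` acting on bi-infinite
sequences, a check on residues mod 3 gives `evenFlip (chiStar z) = σ⁻¹ chiStar (evenFlip (σ z))` and
`evenFlip (σ (chiStar z)) = σ chiStar (evenFlip z)`. For the fixed point `x₀ = chiStar x₀` the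
sequences `evenFlip x₀` and `evenFlip (σ x₀)` are thus exchanged by `chiStar` up to shifts, which
forces all their words into the language of `χ`. Every `x ∈ X_χ` agrees on any finite window with a
shift of `x₀`, so `evenFlip x ∈ X_χ`. Finally `evenFlip x₀` is a shifted fixed point of `chiStar²`,
hence contains every word of the language; so the image of `X_χ` is dense in `X_χ` and, being
compact, is all of it. The relation `evenFlip ∘ σ⁴ = σ² ∘ evenFlip` is immediate.
-/

section Sequences

variable {A : Type}

@[simp]
lemma seqWord_length (x : ℤ → A) (i : ℤ) (n : ℕ) : (seqWord x i n).length = n := by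
  simp [seqWord]

lemma seqWord_add (x : ℤ → A) (i : ℤ) (m n : ℕ) :
    seqWord x i (m + n) = seqWord x i m ++ seqWord x (i + m) n := by
  simp only [seqWord, List.ofFn_add]
  congr 2 with j
  simp only [Fin.val_natAdd]
  push_cast
  ring_nf

lemma seqWord_eq_seqWord_iff {x y : ℤ → A} {i i' : ℤ} {n : ℕ} :
    seqWord x i n = seqWord y i' n ↔ ∀ j < n, x (i + j) = y (i' + j) := by
  simp only [seqWord, List.ofFn_inj, funext_iff, Fin.forall_iff]

lemma seqWord_shiftZ (e : ℤ) (x : ℤ → A) (i : ℤ) (n : ℕ) :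
    seqWord (shiftZ e x) i n = seqWord x (i + e) n :=
  seqWord_eq_seqWord_iff.2 fun j _ => by simp only [shiftZ]; ring_nf

lemma seqWord_infix_seqWord (x : ℤ → A) {i i' : ℤ} {n n' : ℕ} (h : i' ≤ i)
    (h' : i + n ≤ i' + n') : seqWord x i n <:+: seqWord x i' n' := by
  obtain ⟨a, rfl⟩ : ∃ a : ℕ, i = i' + a := ⟨(i - i').toNat, by omega⟩
  obtain ⟨b, rfl⟩ : ∃ b : ℕ, n' = a + n + b := ⟨n' - a - n, by omega⟩
  rw [seqWord_add, seqWord_add]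
  exact ⟨_, _, rfl⟩

lemma exists_seqWord_eq_of_infix {v : List A} {x : ℤ → A} {i : ℤ} {n : ℕ}
    (h : v <:+: seqWord x i n) : ∃ s, seqWord x s v.length = v := by
  obtain ⟨l, r, hlr⟩ := h
  have hn : n = l.length + v.length + r.length := by
    simpa [add_assoc] using (congrArg List.length hlr).symm
  rw [hn, seqWord_add, seqWord_add] at hlr
  obtain ⟨hlv, -⟩ := List.append_inj hlr (by simp)
  exact ⟨_, (List.append_inj hlv (by simp)).2.symm⟩

@[simp]
lemma shiftZ_zero (x : ℤ → A) : shiftZ 0 x = x := by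
  funext m
  simp [shiftZ]

lemma shiftZ_shiftZ (a b : ℤ) (x : ℤ → A) : shiftZ a (shiftZ b x) = shiftZ (a + b) x := by
  funext m
  simp only [shiftZ, add_assoc]

lemma shiftMap_iterate (k : ℕ) (x : ℤ → A) : shiftMap^[k] x = shiftZ k x := by
  induction k generalizing x with
  | zero => funext m; simp [shiftZ]
  | succ k ih =>
    rw [Function.iterate_succ_apply, ih]
    funext m
    simp only [shiftZ, shiftMap]
    push_cast
    ring_nf

lemma shiftZ_mem_substShift {θ : A → List A} {x : ℤ → A} (hx : x ∈ substShift θ) (e : ℤ) :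
    shiftZ e x ∈ substShift θ := fun i n => by
  rw [seqWord_shiftZ]
  exact hx (i + e) n

lemma isClosed_substShift [TopologicalSpace A] [DiscreteTopology A] (θ : A → List A) :
    IsClosed (substShift θ) := by
  have hwindow (i : ℤ) (n : ℕ) : Continuous fun (x : ℤ → A) (m : Fin n) => x (i + m) :=
    continuous_pi fun m => continuous_apply _
  have : substShift θ = ⋂ (i : ℤ) (n : ℕ), (fun (x : ℤ → A) (m : Fin n) => x (i + m)) ⁻¹'
      {w | ∃ (k : ℕ) (a : A), (List.ofFn w).IsInfix (substPow θ k a)} := by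
    ext x
    simp [substShift, seqWord]
  rw [this]
  exact isClosed_iInter fun i => isClosed_iInter fun n =>
    (isClosed_discrete _).preimage (hwindow i n)

lemma mem_closure_of_forall_agree [TopologicalSpace A] {S : Set (ℤ → A)} {y : ℤ → A}
    (h : ∀ k : ℕ, ∃ x ∈ S, ∀ n : ℤ, n.natAbs ≤ k → x n = y n) : y ∈ closure S := by
  choose x hxS hxy using h
  refine mem_closure_of_tendsto (b := Filter.atTop) (tendsto_pi_nhds.2 fun n => ?_)
    (Filter.Eventually.of_forall hxS)
  refine tendsto_const_nhds.congr' ?_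
  filter_upwards [Filter.eventually_ge_atTop n.natAbs] with k hk
  exact (hxy k n hk).symm

end Sequences

lemma substPow_succ_eq_flatMap {A : Type} (θ : A → List A) (k : ℕ) (a : A) :
    substPow θ (k + 1) a = (substPow θ k a).flatMap θ := by
  induction k generalizing a with
  | zero => simp [substPow]
  | succ k ih =>
    calc substPow θ (k + 2) a = (θ a).flatMap fun b => (substPow θ k b).flatMap θ := by
          simp only [substPow, ← ih]
    _ = (substPow θ (k + 1) a).flatMap θ := by rw [substPow, List.flatMap_assoc]

lemma chi_eq (c : Fin 2) : chi c = [0, c, 1] := by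
  fin_cases c <;> rfl

lemma substPow_chi_succ (k : ℕ) (c : Fin 2) :
    substPow chi (k + 1) c = substPow chi k 0 ++ substPow chi k c ++ substPow chi k 1 := by
  simp [substPow, chi_eq]

lemma substPow_chi_infix_succ (k : ℕ) (a c : Fin 2) :
    substPow chi k a <:+: substPow chi (k + 1) c := by
  rw [substPow_chi_succ]
  fin_cases a
  · exact ⟨[], substPow chi k c ++ substPow chi k 1, by simp⟩
  · exact ⟨substPow chi k 0 ++ substPow chi k c, [], by simp⟩

lemma substPow_chi_infix_of_lt {k K : ℕ} (h : k < K) (a c : Fin 2) :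
    substPow chi k a <:+: substPow chi K c := by
  induction K, h using Nat.le_induction generalizing c with
  | base => exact substPow_chi_infix_succ k a c
  | succ K _ ih => exact (ih 0).trans (substPow_chi_infix_succ K 0 c)

def chiLang : Set (List (Fin 2)) := {v | ∃ (k : ℕ) (a : Fin 2), v <:+: substPow chi k a}

lemma mem_chiLang_of_infix {v w : List (Fin 2)} (hv : v ∈ chiLang) (h : w <:+: v) :
    w ∈ chiLang := by
  obtain ⟨k, a, hk⟩ := hv
  exact ⟨k, a, h.trans hk⟩

lemma flatMap_chi_mem_chiLang {v : List (Fin 2)} (hv : v ∈ chiLang) : v.flatMap chi ∈ chiLang := by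
  obtain ⟨k, a, hk⟩ := hv
  exact ⟨k + 1, a, substPow_succ_eq_flatMap chi k a ▸ hk.flatMap chi⟩

lemma mem_chiLang_of_length_le_two {v : List (Fin 2)} (h : v.length ≤ 2) : v ∈ chiLang := by
  refine ⟨2, 0, ?_⟩
  match v, h with
  | [], _ => decide
  | [a], _ => fin_cases a <;> decide
  | [a, b], _ => fin_cases a <;> fin_cases b <;> decide

/-- `χ` acting on bi-infinite sequences: `chiStar w = ⋯ χ(w (-1)) χ(w 0) χ(w 1) ⋯` with `χ(w 0)`
at positions `0, 1, 2`. -/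
def chiStar (w : ℤ → Fin 2) (n : ℤ) : Fin 2 :=
  if n % 3 = 0 then 0 else if n % 3 = 1 then w (n / 3) else 1

section ChiStar

variable (w : ℤ → Fin 2) (q : ℤ)

lemma chiStar_three_mul : chiStar w (3 * q) = 0 := by
  simp [chiStar]

lemma chiStar_three_mul_add_one : chiStar w (3 * q + 1) = w q := by
  rw [chiStar, if_neg (by omega), if_pos (by omega)]
  congr 1
  omega

lemma chiStar_three_mul_add_two : chiStar w (3 * q + 2) = 1 := by
  rw [chiStar, if_neg (by omega), if_neg (by omega)]

lemma chiStar_shiftZ (e : ℤ) : chiStar (shiftZ e w) = shiftZ (3 * e) (chiStar w) := by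
  funext n
  simp only [chiStar, shiftZ]
  rw [show (n + 3 * e) % 3 = n % 3 by omega, show (n + 3 * e) / 3 = n / 3 + e by omega]

lemma chiStar_iterate_shiftZ (m : ℕ) (e : ℤ) :
    chiStar^[m] (shiftZ e w) = shiftZ (3 ^ m * e) (chiStar^[m] w) := by
  induction m generalizing e w with
  | zero => simp
  | succ m ih =>
    rw [Function.iterate_succ_apply, chiStar_shiftZ, ih, Function.iterate_succ_apply]
    congr 1
    ring

lemma seqWord_chiStar (i : ℤ) (n : ℕ) :
    seqWord (chiStar w) (3 * i) (3 * n) = (seqWord w i n).flatMap chi := by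
  induction n generalizing i with
  | zero => rfl
  | succ n ih =>
    have hblock : seqWord (chiStar w) (3 * i) 3 = chi (w i) := by
      simp [seqWord, chi_eq, List.ofFn_succ, chiStar_three_mul, chiStar_three_mul_add_one,
        chiStar_three_mul_add_two]
    rw [show 3 * (n + 1) = 3 + 3 * n by ring, seqWord_add, hblock, add_comm n, seqWord_add,
      List.flatMap_append]
    push_cast
    rw [show 3 * i + 3 = 3 * (i + 1) by ring, ih]
    simp [seqWord]

lemma seqWord_chiStar_iterate (K : ℕ) :
    seqWord (chiStar^[K] w) 0 (3 ^ K) = substPow chi K (w 0) := by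
  induction K with
  | zero => simp [seqWord, substPow]
  | succ K ih =>
    have h := seqWord_chiStar (chiStar^[K] w) 0 (3 ^ K)
    rw [mul_zero] at h
    rw [Function.iterate_succ_apply', pow_succ', h, ih, substPow_succ_eq_flatMap]

lemma seqWord_chiStar_infix (i : ℤ) (n : ℕ) :
    seqWord (chiStar w) i n <:+: (seqWord w (i / 3) ((n + 2) / 3 + 1)).flatMap chi := by
  rw [← seqWord_chiStar]
  apply seqWord_infix_seqWord <;> push_cast <;> omega

end ChiStar

/-- A word of length `n > 2` of `shiftZ e (chiStar z)` sits inside the `χ`-image of a strictly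
shorter word of `z`, and all words of length `≤ 2` are legal. -/
lemma subset_substShift_chi {S : Set (ℤ → Fin 2)}
    (hS : ∀ y ∈ S, ∃ z ∈ S, ∃ e, y = shiftZ e (chiStar z)) : S ⊆ substShift chi := by
  suffices h : ∀ n, ∀ y ∈ S, ∀ i, seqWord y i n ∈ chiLang from fun y hy i n => h n y hy i
  intro n
  induction n using Nat.strong_induction_on with
  | _ n ih =>
    intro y hy i
    rcases le_or_gt n 2 with hn | hn
    · exact mem_chiLang_of_length_le_two (by simpa using hn)
    obtain ⟨z, hz, e, rfl⟩ := hS y hy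
    rw [seqWord_shiftZ]
    exact mem_chiLang_of_infix
      (flatMap_chi_mem_chiLang (ih _ (by omega) z hz _)) (seqWord_chiStar_infix z _ n)

lemma exists_seqWord_eq_of_mem_chiLang {z : ℤ → Fin 2} {m : ℕ} {e : ℤ} (hm : 0 < m)
    (hz : z = shiftZ e (chiStar^[m] z)) {v : List (Fin 2)} (hv : v ∈ chiLang) :
    ∃ s, seqWord z s v.length = v := by
  have hiter : ∀ K, ∃ e', z = shiftZ e' (chiStar^[m * K] z) := by
    intro K
    induction K with
    | zero => exact ⟨0, by simp⟩
    | succ K ih =>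
      obtain ⟨e', he'⟩ := ih
      refine ⟨e' + 3 ^ (m * K) * e, ?_⟩
      conv_lhs => rw [he', hz, chiStar_iterate_shiftZ, ← Function.iterate_add_apply]
      rw [shiftZ_shiftZ, mul_add, mul_one, add_comm (m * K)]
  obtain ⟨k, a, hk⟩ := hv
  obtain ⟨e', he'⟩ := hiter (k + 1)
  have hblock : v <:+: seqWord (chiStar^[m * (k + 1)] z) 0 (3 ^ (m * (k + 1))) := by
    rw [seqWord_chiStar_iterate]
    exact hk.trans (substPow_chi_infix_of_lt (by nlinarith) a _)
  obtain ⟨s, hs⟩ := exists_seqWord_eq_of_infix hblock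
  refine ⟨s - e', ?_⟩
  rw [he', seqWord_shiftZ, sub_add_cancel, hs]

/-- The fixed point `χ^∞(1).χ^∞(0)` of `chiStar`; the recursion only unfolds at positions
`n ≡ 1 (mod 3)`, where `|n / 3| < |n|`. -/
def chiFix (n : ℤ) : Fin 2 :=
  if n % 3 = 0 then 0 else if n % 3 = 1 then chiFix (n / 3) else 1
termination_by n.natAbs
decreasing_by omega

lemma chiStar_chiFix : chiStar chiFix = chiFix := by
  funext n
  rw [chiFix]
  rfl

lemma chiFix_mem : chiFix ∈ substShift chi :=
  subset_substShift_chi (S := {chiFix})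
    (fun y hy => ⟨chiFix, rfl, 0, by rw [hy, shiftZ_zero, chiStar_chiFix]⟩) rfl

def evenFlip (x : ℤ → Fin 2) (n : ℤ) : Fin 2 := 1 - x (2 * n)

lemma continuous_evenFlip : Continuous evenFlip :=
  continuous_pi fun n =>
    (continuous_of_discreteTopology (f := fun c : Fin 2 => 1 - c)).comp (continuous_apply (2 * n))

lemma evenFlip_shiftZ (e : ℤ) (x : ℤ → Fin 2) :
    evenFlip (shiftZ (2 * e) x) = shiftZ e (evenFlip x) := by
  funext n
  simp only [evenFlip, shiftZ, mul_add]

lemma evenFlip_chiStar (z : ℤ → Fin 2) :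
    evenFlip (chiStar z) = shiftZ (-1) (chiStar (evenFlip (shiftZ 1 z))) := by
  funext n
  obtain ⟨q, rfl | rfl | rfl⟩ : ∃ q, n = 3 * q ∨ n = 3 * q + 1 ∨ n = 3 * q + 2 :=
    ⟨n / 3, by omega⟩
  · rw [shiftZ, evenFlip, show 2 * (3 * q) = 3 * (2 * q) by ring,
      show 3 * q + -1 = 3 * (q - 1) + 2 by ring, chiStar_three_mul, chiStar_three_mul_add_two]
    rfl
  · rw [shiftZ, evenFlip, show 2 * (3 * q + 1) = 3 * (2 * q) + 2 by ring,
      show 3 * q + 1 + -1 = 3 * q by ring, chiStar_three_mul, chiStar_three_mul_add_two]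
    rfl
  · rw [shiftZ, evenFlip, show 2 * (3 * q + 2) = 3 * (2 * q + 1) + 1 by ring,
      show 3 * q + 2 + -1 = 3 * q + 1 by ring, chiStar_three_mul_add_one,
      chiStar_three_mul_add_one, evenFlip, shiftZ]

lemma evenFlip_shiftZ_one_chiStar (z : ℤ → Fin 2) :
    evenFlip (shiftZ 1 (chiStar z)) = shiftZ 1 (chiStar (evenFlip z)) := by
  funext n
  simp only [shiftZ, evenFlip]
  obtain ⟨q, rfl | rfl | rfl⟩ : ∃ q, n = 3 * q ∨ n = 3 * q + 1 ∨ n = 3 * q + 2 :=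
    ⟨n / 3, by omega⟩
  · rw [show 2 * (3 * q) + 1 = 3 * (2 * q) + 1 by ring, chiStar_three_mul_add_one,
      chiStar_three_mul_add_one]
    rfl
  · rw [show 2 * (3 * q + 1) + 1 = 3 * (2 * q + 1) by ring,
      show 3 * q + 1 + 1 = 3 * q + 2 by ring, chiStar_three_mul, chiStar_three_mul_add_two]
    rfl
  · rw [show 2 * (3 * q + 2) + 1 = 3 * (2 * q + 1) + 2 by ring,
      show 3 * q + 2 + 1 = 3 * (q + 1) by ring, chiStar_three_mul, chiStar_three_mul_add_two]
    rfl

lemma evenFlip_chiFix_eq :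
    evenFlip chiFix = shiftZ (-1) (chiStar (evenFlip (shiftZ 1 chiFix))) := by
  conv_lhs => rw [← chiStar_chiFix]
  exact evenFlip_chiStar chiFix

lemma evenFlip_shiftZ_one_chiFix_eq :
    evenFlip (shiftZ 1 chiFix) = shiftZ 1 (chiStar (evenFlip chiFix)) := by
  conv_lhs => rw [← chiStar_chiFix]
  exact evenFlip_shiftZ_one_chiStar chiFix

lemma evenFlip_shiftZ_chiFix_mem (t : ℤ) : evenFlip (shiftZ t chiFix) ∈ substShift chi := by
  have hmem : {evenFlip chiFix, evenFlip (shiftZ 1 chiFix)} ⊆ substShift chi := by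
    refine subset_substShift_chi fun y hy => ?_
    rcases hy with rfl | rfl
    · exact ⟨_, Or.inr rfl, -1, evenFlip_chiFix_eq⟩
    · exact ⟨_, Or.inl rfl, 1, evenFlip_shiftZ_one_chiFix_eq⟩
  obtain ⟨s, rfl | rfl⟩ := Int.even_or_odd' t
  · rw [evenFlip_shiftZ]
    exact shiftZ_mem_substShift (hmem (Or.inl rfl)) s
  · rw [← shiftZ_shiftZ, evenFlip_shiftZ]
    exact shiftZ_mem_substShift (hmem (Or.inr rfl)) s

lemma evenFlip_chiFix_eq_shiftZ_chiStar_iterate :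
    evenFlip chiFix = shiftZ 2 (chiStar^[2] (evenFlip chiFix)) := by
  conv_lhs =>
    rw [evenFlip_chiFix_eq, evenFlip_shiftZ_one_chiFix_eq, chiStar_shiftZ, shiftZ_shiftZ]
  rfl

lemma mapsTo_evenFlip : MapsTo evenFlip (substShift chi) (substShift chi) := by
  intro x hx i n
  obtain ⟨t, ht⟩ := exists_seqWord_eq_of_mem_chiLang (m := 1) (e := 0) one_pos
    (by rw [Function.iterate_one, chiStar_chiFix, shiftZ_zero]) (hx (2 * i) (2 * n))
  rw [seqWord_length, seqWord_eq_seqWord_iff] at ht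
  have hagree :
      seqWord (evenFlip x) i n = seqWord (evenFlip (shiftZ (t - 2 * i) chiFix)) i n := by
    refine seqWord_eq_seqWord_iff.2 fun j hj => ?_
    simp only [evenFlip, shiftZ]
    rw [show 2 * (i + j) + (t - 2 * i) = t + (2 * j : ℕ) by push_cast; ring, ht _ (by omega)]
    push_cast
    ring_nf
  rw [hagree]
  exact evenFlip_shiftZ_chiFix_mem _ i n

lemma surjOn_evenFlip : SurjOn evenFlip (substShift chi) (substShift chi) := by
  intro y hy
  have hclosed : IsClosed (evenFlip '' substShift chi) :=
    ((isClosed_substShift chi).isCompact.image continuous_evenFlip).isClosed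
  rw [← hclosed.closure_eq]
  refine mem_closure_of_forall_agree fun k => ?_
  obtain ⟨s, hs⟩ := exists_seqWord_eq_of_mem_chiLang two_pos
    evenFlip_chiFix_eq_shiftZ_chiStar_iterate (hy (-k) (2 * k + 1))
  rw [seqWord_length, seqWord_eq_seqWord_iff] at hs
  refine ⟨_, ⟨_, shiftZ_mem_substShift chiFix_mem (2 * (s + k)), rfl⟩, fun n hn => ?_⟩
  rw [evenFlip_shiftZ, shiftZ]
  have hj := hs (n + k).toNat (by omega)
  rw [show ((n + k).toNat : ℤ) = n + k by omega] at hj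
  rw [show n + (s + k) = s + (n + k) by ring, hj]
  congr 1
  ring

lemma evenFlip_shiftMap_iterate_four (x : ℤ → Fin 2) :
    evenFlip (shiftMap^[4] x) = shiftMap^[2] (evenFlip x) := by
  rw [shiftMap_iterate, shiftMap_iterate, ← evenFlip_shiftZ]
  rfl

/-- (X_χ, σ^2) is a topological factor of (X_χ, σ^4). -/
theorem statement17 :
    IsFactorOn (substShift chi) (shiftMap^[4]) (substShift chi) (shiftMap^[2]) :=
  ⟨evenFlip, mapsTo_evenFlip, continuous_evenFlip.continuousOn, surjOn_evenFlip,
    fun x _ => evenFlip_shiftMap_iterate_four x⟩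

end
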